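/- Let 𝓑 be a bounding class, (G, L) a group with length function, and let S and T be free G-sets equipped with weight functions w_S and w_T. Suppose: S/G is finite, with a complete set of orbit representatives s₁, …, s_N ∈ S satisfying w_S(s_j) ≤ w_S(g·s_j) for all j and all g ∈ G; and there exist constants D₁, D₂, D₃ with w(gz) ≤ D₁·L(g) + w(z) for all z in S or T (w the respective weight) and L(g) ≤ D₂·w_S(g·s_j) + D₃ for all 1 ≤ j ≤ N and g ∈ G. Let V = ℂ[S] and W = ℂ[T] be the spaces of finitely supported ℂ-valued functions, with weighted ℓ¹-seminorms ‖Σ α_z z‖_λ = Σ |α_z|·λ(w(z)) for λ ∈ 𝓑. Then every G-equivariant linear map 𝔣 : V → W is 𝓑-bounded: for every λ ∈ 𝓑 there exists λ₁ ∈ 𝓑 with ‖𝔣(v)‖_λ ≤ ‖v‖_{λ₁} for all v ∈ V. -/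

import Mathlib

open scoped BigOperators

/-- A bounding class: a set of non-decreasing positive functions on `[0,∞)`
containing the constant function `1`, weakly closed under non-negative rational
linear combinations and under right composition with affine functions with
non-negative rational coefficients. -/
structure BoundingClass where
  carrier : Set (ℝ → ℝ)
  mono : ∀ f ∈ carrier, ∀ x y : ℝ, 0 ≤ x → x ≤ y → f x ≤ f y
  pos : ∀ f ∈ carrier, ∀ x : ℝ, 0 ≤ x → 0 < f x
  one_mem : (fun _ => (1 : ℝ)) ∈ carrier
  lin_comb : ∀ (n : ℕ) (f : Fin n → (ℝ → ℝ)) (q : Fin n → ℚ),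
    (∀ i, f i ∈ carrier) → (∀ i, 0 ≤ q i) →
    ∃ g ∈ carrier, ∀ x : ℝ, 0 ≤ x → ∑ i, (q i : ℝ) * f i x < g x
  comp_lin : ∀ f ∈ carrier, ∀ a b : ℚ, 0 ≤ a → 0 ≤ b →
    ∃ h ∈ carrier, ∀ x : ℝ, 0 ≤ x → f ((a : ℝ) * x + (b : ℝ)) < h x

/-- The weighted `ℓ¹`-seminorm `‖Σ α_z z‖_λ = Σ |α_z| · λ (w z)` on `ℂ[Z]`. -/
noncomputable def wSeminorm {Z : Type*} (w : Z → ℝ) (lam : ℝ → ℝ) (x : Z →₀ ℂ) : ℝ :=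
  x.sum fun z c => ‖c‖ * lam (w z)

/-! `𝔣` is determined by the finitely many vectors `F j = 𝔣 (s j)`. By equivariance
`𝔣 (g • s j) = g • F j`, and for `t` in the support of `F j` the weight of `g • t` is at most
`D₁ L g + wT t ≤ D₁ D₂ wS (g • s j) + D₁ D₃ + M`, where `M` bounds the weights on these finitely
many supports. Hence `‖𝔣 z‖_λ ≤ C · λ (a · wS z + b)` for every basis vector `z`, with `C`
bounding the `ℓ¹`-norms of the `F j`. The closure properties of `𝓑` dominate the right-hand side
by some `λ₁ (wS z)`, and the triangle inequality extends the estimate to all of `ℂ[S]`. -/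

namespace BoundingClass

variable (B : BoundingClass) {f : ℝ → ℝ}

theorem exists_mem_forall_comp_affine_le (hf : f ∈ B.carrier) (a b : ℝ) :
    ∃ h ∈ B.carrier, ∀ x, 0 ≤ x → ∀ y, 0 ≤ y → y ≤ a * x + b → f y ≤ h x := by
  obtain ⟨m, ha⟩ := exists_nat_ge a
  obtain ⟨n, hb⟩ := exists_nat_ge b
  obtain ⟨h, hB, hfh⟩ := B.comp_lin f hf m n (Nat.cast_nonneg m) (Nat.cast_nonneg n)
  refine ⟨h, hB, fun x hx y hy hyx => ?_⟩
  have hy_le : y ≤ m * x + n := by nlinarith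
  calc f y ≤ f (m * x + n) := B.mono f hf y _ hy hy_le
    _ ≤ h x := by simpa using (hfh x hx).le

theorem exists_mem_forall_const_mul_le (hf : f ∈ B.carrier) (c : ℝ) :
    ∃ h ∈ B.carrier, ∀ x, 0 ≤ x → c * f x ≤ h x := by
  obtain ⟨n, hc⟩ := exists_nat_ge c
  obtain ⟨h, hB, hfh⟩ := B.lin_comb 1 (fun _ => f) (fun _ => n) (fun _ => hf)
    (fun _ => Nat.cast_nonneg n)
  refine ⟨h, hB, fun x hx => ?_⟩
  calc c * f x ≤ n * f x := mul_le_mul_of_nonneg_right hc (B.pos f hf x hx).le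
    _ ≤ h x := by simpa using (hfh x hx).le

end BoundingClass

section wSeminorm

variable {Z Z' : Type*} (w : Z → ℝ) (lam : ℝ → ℝ)

theorem wSeminorm_eq_sum {x : Z →₀ ℂ} {A : Finset Z} (hA : x.support ⊆ A) :
    wSeminorm w lam x = ∑ z ∈ A, ‖x z‖ * lam (w z) :=
  Finsupp.sum_of_support_subset x hA _ (by simp)

theorem wSeminorm_zero : wSeminorm w lam 0 = 0 := by
  simp [wSeminorm]

theorem wSeminorm_smul (c : ℂ) (x : Z →₀ ℂ) :
    wSeminorm w lam (c • x) = ‖c‖ * wSeminorm w lam x := by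
  rw [wSeminorm_eq_sum w lam Finsupp.support_smul, wSeminorm_eq_sum w lam subset_rfl,
    Finset.mul_sum]
  simp [mul_assoc]

theorem wSeminorm_add_le (hlam : ∀ z, 0 ≤ lam (w z)) (x y : Z →₀ ℂ) :
    wSeminorm w lam (x + y) ≤ wSeminorm w lam x + wSeminorm w lam y := by
  classical
  rw [wSeminorm_eq_sum w lam Finsupp.support_add,
    wSeminorm_eq_sum w lam Finset.subset_union_left,
    wSeminorm_eq_sum w lam Finset.subset_union_right, ← Finset.sum_add_distrib]
  refine Finset.sum_le_sum fun z _ => ?_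
  rw [Finsupp.add_apply, ← add_mul]
  exact mul_le_mul_of_nonneg_right (norm_add_le _ _) (hlam z)

theorem wSeminorm_le_of_forall_le {x : Z →₀ ℂ} {c : ℝ} (h : ∀ z ∈ x.support, lam (w z) ≤ c) :
    wSeminorm w lam x ≤ (x.sum fun _ a => ‖a‖) * c := by
  rw [Finsupp.sum, Finset.sum_mul]
  exact Finset.sum_le_sum fun z hz => mul_le_mul_of_nonneg_left (h z hz) (norm_nonneg _)

theorem wSeminorm_mapDomain {e : Z' → Z} (he : Function.Injective e) (x : Z' →₀ ℂ) :
    wSeminorm w lam (Finsupp.mapDomain e x) = wSeminorm (w ∘ e) lam x :=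
  Finsupp.sum_mapDomain_index_inj he

theorem wSeminorm_map_le_of_forall_single_le {S T : Type*} (wS : S → ℝ) (wT : T → ℝ)
    (hlam : ∀ t, 0 ≤ lam (wT t)) (μ : ℝ → ℝ) (𝔣 : (S →₀ ℂ) →ₗ[ℂ] (T →₀ ℂ))
    (h𝔣 : ∀ z, wSeminorm wT lam (𝔣 (Finsupp.single z 1)) ≤ μ (wS z)) (v : S →₀ ℂ) :
    wSeminorm wT lam (𝔣 v) ≤ wSeminorm wS μ v := by
  have hv : 𝔣 v = ∑ z ∈ v.support, v z • 𝔣 (Finsupp.single z 1) := by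
    conv_lhs => rw [← Finsupp.sum_single v]
    rw [Finsupp.sum, map_sum]
    exact Finset.sum_congr rfl fun z _ => by rw [← map_smul, Finsupp.smul_single_one]
  calc wSeminorm wT lam (𝔣 v)
      ≤ ∑ z ∈ v.support, wSeminorm wT lam (v z • 𝔣 (Finsupp.single z 1)) := by
        rw [hv]
        exact Finset.le_sum_of_subadditive _ (wSeminorm_zero wT lam).le
          (wSeminorm_add_le wT lam hlam) _ _
    _ ≤ ∑ z ∈ v.support, ‖v z‖ * μ (wS z) := by
        simp only [wSeminorm_smul]
        exact Finset.sum_le_sum fun z _ => mul_le_mul_of_nonneg_left (h𝔣 z) (norm_nonneg _)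
    _ = wSeminorm wS μ v := rfl

theorem wSeminorm_map_single_smul {G S T : Type*} [Group G] [MulAction G S] [MulAction G T]
    (wT : T → ℝ) (𝔣 : (S →₀ ℂ) →ₗ[ℂ] (T →₀ ℂ))
    (hequiv : ∀ (g : G) (v : S →₀ ℂ),
      𝔣 (Finsupp.mapDomain (fun x => g • x) v) = Finsupp.mapDomain (fun x => g • x) (𝔣 v))
    (g : G) (x : S) :
    wSeminorm wT lam (𝔣 (Finsupp.single (g • x) 1))
      = wSeminorm (fun t => wT (g • t)) lam (𝔣 (Finsupp.single x 1)) := by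
  rw [← Finsupp.mapDomain_single, hequiv, wSeminorm_mapDomain wT lam (MulAction.injective g)]
  rfl

end wSeminorm

theorem equivariant_map_bounded_general
    (B : BoundingClass)
    {G : Type*} [Group G] (L : G → ℝ)
    {S T : Type*} [MulAction G S] [MulAction G T]
    (wS : S → ℝ) (wT : T → ℝ)
    (hwS_nonneg : ∀ x, 0 ≤ wS x) (hwT_nonneg : ∀ x, 0 ≤ wT x)
    -- a complete, weight-minimizing set of orbit representatives of `S/G`
    (N : ℕ) (s : Fin N → S)
    (hcomplete : ∀ x : S, ∃ (j : Fin N) (g : G), g • s j = x)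
    -- the constants `D₁, D₂, D₃`
    (D₁ D₂ D₃ : ℝ) (hD₁ : 0 ≤ D₁)
    (hD₁T : ∀ (g : G) (z : T), wT (g • z) ≤ D₁ * L g + wT z)
    (hD₂₃ : ∀ (j : Fin N) (g : G), L g ≤ D₂ * wS (g • s j) + D₃)
    -- an arbitrary `G`-equivariant linear map
    (𝔣 : (S →₀ ℂ) →ₗ[ℂ] (T →₀ ℂ))
    (hequiv : ∀ (g : G) (v : S →₀ ℂ),
      𝔣 (Finsupp.mapDomain (fun x => g • x) v)
        = Finsupp.mapDomain (fun x => g • x) (𝔣 v)) :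
    ∀ lam ∈ B.carrier, ∃ lam₁ ∈ B.carrier,
      ∀ v : S →₀ ℂ, wSeminorm wT lam (𝔣 v) ≤ wSeminorm wS lam₁ v := by
  classical
  intro lam hlam
  set F : Fin N → (T →₀ ℂ) := fun j => 𝔣 (Finsupp.single (s j) 1)
  obtain ⟨M, hM⟩ := ((Finset.univ.biUnion fun j => (F j).support).image wT).bddAbove
  obtain ⟨C, hC⟩ := Finite.bddAbove_range fun j => (F j).sum fun _ a => ‖a‖
  obtain ⟨h, hh, hlam_le⟩ := B.exists_mem_forall_comp_affine_le hlam (D₁ * D₂) (D₁ * D₃ + M)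
  obtain ⟨lam₁, hlam₁, hh_le⟩ := B.exists_mem_forall_const_mul_le hh C
  refine ⟨lam₁, hlam₁, wSeminorm_map_le_of_forall_single_le lam wS wT
    (fun t => (B.pos lam hlam _ (hwT_nonneg t)).le) lam₁ 𝔣 fun z => ?_⟩
  obtain ⟨j, g, rfl⟩ := hcomplete z
  have hweight : ∀ t ∈ (F j).support, wT (g • t) ≤ D₁ * D₂ * wS (g • s j) + (D₁ * D₃ + M) := by
    intro t ht
    have hLg := mul_le_mul_of_nonneg_left (hD₂₃ j g) hD₁
    have hM_t : wT t ≤ M := hM <| Finset.mem_image_of_mem wT <|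
      Finset.mem_biUnion.2 ⟨j, Finset.mem_univ j, ht⟩
    linarith [hD₁T g t]
  have hw := hwS_nonneg (g • s j)
  calc wSeminorm wT lam (𝔣 (Finsupp.single (g • s j) 1))
      = wSeminorm (fun t => wT (g • t)) lam (F j) :=
        wSeminorm_map_single_smul lam wT 𝔣 hequiv g _
    _ ≤ (F j).sum (fun _ a => ‖a‖) * h (wS (g • s j)) :=
        wSeminorm_le_of_forall_le _ _ fun t ht => hlam_le _ hw _ (hwT_nonneg _) (hweight t ht)
    _ ≤ C * h (wS (g • s j)) := mul_le_mul_of_nonneg_right (hC ⟨j, rfl⟩) (B.pos h hh _ hw).le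
    _ ≤ lam₁ (wS (g • s j)) := hh_le _ hw

/-- with `S, T` free `G`-sets with weights, `S/G` finite with
weight-minimizing orbit representatives `s₁, …, s_N`, and constants `D₁, D₂, D₃` as
in the statement, every `G`-equivariant linear map `𝔣 : ℂ[S] → ℂ[T]` is `𝓑`-bounded:
for every `λ ∈ 𝓑` there is `λ₁ ∈ 𝓑` with `‖𝔣 v‖_λ ≤ ‖v‖_{λ₁}` for all `v`. -/
theorem equivariant_map_bounded
    (B : BoundingClass)
    {G : Type*} [Group G] (L : G → ℝ)
    (hL_nonneg : ∀ g : G, 0 ≤ L g)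
    (hL_sub : ∀ g h : G, L (g * h) ≤ L g + L h)
    (hL_inv : ∀ g : G, L g⁻¹ = L g)
    {S T : Type*} [MulAction G S] [MulAction G T]
    (hfreeS : ∀ (g : G) (x : S), g • x = x → g = 1)
    (hfreeT : ∀ (g : G) (x : T), g • x = x → g = 1)
    (wS : S → ℝ) (wT : T → ℝ)
    (hwS_nonneg : ∀ x, 0 ≤ wS x) (hwT_nonneg : ∀ x, 0 ≤ wT x)
    -- a complete, weight-minimizing set of orbit representatives of `S/G`
    (N : ℕ) (s : Fin N → S)
    (hcomplete : ∀ x : S, ∃ (j : Fin N) (g : G), g • s j = x)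
    (hdistinct : ∀ (j j' : Fin N) (g : G), g • s j = s j' → j = j')
    (hmin : ∀ (j : Fin N) (g : G), wS (s j) ≤ wS (g • s j))
    -- the constants `D₁, D₂, D₃`
    (D₁ D₂ D₃ : ℝ) (hD₁ : 0 ≤ D₁) (hD₂ : 0 ≤ D₂) (hD₃ : 0 ≤ D₃)
    (hD₁S : ∀ (g : G) (z : S), wS (g • z) ≤ D₁ * L g + wS z)
    (hD₁T : ∀ (g : G) (z : T), wT (g • z) ≤ D₁ * L g + wT z)
    (hD₂₃ : ∀ (j : Fin N) (g : G), L g ≤ D₂ * wS (g • s j) + D₃)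
    -- an arbitrary `G`-equivariant linear map
    (𝔣 : (S →₀ ℂ) →ₗ[ℂ] (T →₀ ℂ))
    (hequiv : ∀ (g : G) (v : S →₀ ℂ),
      𝔣 (Finsupp.mapDomain (fun x => g • x) v)
        = Finsupp.mapDomain (fun x => g • x) (𝔣 v)) :
    ∀ lam ∈ B.carrier, ∃ lam₁ ∈ B.carrier,
      ∀ v : S →₀ ℂ, wSeminorm wT lam (𝔣 v) ≤ wSeminorm wS lam₁ v :=
  equivariant_map_bounded_general B L wS wT hwS_nonneg hwT_nonneg N s hcomplete D₁ D₂ D₃ hD₁ hD₁T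
    hD₂₃ 𝔣 hequiv
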